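/- Let s be a base, M a finite set of positive integers, n a positive integer that does not divide any element of M, and let U ⊆ B_s^{ℓ_U} be a set of blocks of length ℓ_U that is balanced for M and B_s and not balanced for n and B_s, with n dividing ℓ_U. Then there is a positive real number ε and a block d ∈ B_s^n such that for every positive real number δ there is a positive integer ℓ_0 such that for all ℓ ≥ ℓ_0: the number of blocks u ∈ B_s^{ℓ·ℓ_U} such that (u;ℓ_U) ∈ U^ℓ and occ((u;n), d)/|(u;n)| < 1/s^n − ε, is greater than (1−δ)·(#U)^ℓ. (The number ε does not depend on δ.) -/

import Mathlib

/-- Number of occurrences of `z` in the finite sequence `w`. -/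
def occCount {α : Type*} [DecidableEq α] {L : ℕ} (w : Fin L → α) (z : α) : ℕ :=
  (Finset.univ.filter (fun i => w i = z)).card

/-- `chunk w m` is `(w; m)`: the sequence of `L / m` consecutive blocks of length `m`
whose concatenation is the largest prefix of `w` whose length is a multiple of `m`. -/
def chunk {s L : ℕ} (w : Fin L → Fin s) (m : ℕ) : Fin (L / m) → (Fin m → Fin s) :=
  fun i j => w ⟨i.val * m + j.val, by
    have h1 : i.val + 1 ≤ L / m := i.isLt
    have h2 : (i.val + 1) * m ≤ L / m * m := Nat.mul_le_mul_right m h1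
    have h3 : L / m * m ≤ L := Nat.div_mul_le_self L m
    have h4 : i.val * m + m = (i.val + 1) * m := by ring
    have h5 : j.val < m := j.isLt
    omega⟩

/-- A finite set `U` of blocks of length `ℓ` over `B_s` is balanced for `m` and `B_s` if
`m ∣ ℓ` and the concatenation of the blocks of `U` (in any order) is balanced for `m`,
i.e. the counts of any two `m`-blocks, summed over the blocks of `U`, coincide. -/
def BalancedSet (s ℓ m : ℕ) (U : Finset (Fin ℓ → Fin s)) : Prop :=
  m ∣ ℓ ∧ ∀ z z' : Fin m → Fin s,
    (∑ w ∈ U, occCount (chunk w m) z) = ∑ w ∈ U, occCount (chunk w m) z'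

/-!
Let `c w` count the occurrences of `d` in `(w; n)`. Since `U` is not balanced for `n`, some `d`
occurs less often than on average, so the mean `μ` of `c` over `U` lies strictly below
`(ℓU / n) / s ^ n`. As `n ∣ ℓU`, the count of `d` in `(u; n)` is the sum of `c` over the `ℓ` blocks
of `(u; ℓU)`; for `(u; ℓU)` uniform in `U ^ ℓ` this is a sum of `ℓ` independent copies of `c`,
whose variance grows only linearly in `ℓ`. By Chebyshev's inequality, all but a vanishing
proportion of these `u` have frequency of `d` below the midpoint between `μ / (ℓU / n)` and
`1 / s ^ n`; half the gap is `ε`.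
-/

open Finset Fintype Filter BigOperators

theorem Fintype.exists_card_nsmul_lt_sum {ι M : Type*} [Fintype ι] [AddCommMonoid M]
    [LinearOrder M] [IsOrderedCancelAddMonoid M] {S : ι → M} (h : ∃ i j, S i ≠ S j) :
    ∃ d, Fintype.card ι • S d < ∑ i, S i := by
  obtain ⟨i, j, hij⟩ := h
  have : Nonempty ι := ⟨i⟩
  obtain ⟨d, hd⟩ := Finite.exists_min S
  refine ⟨d, ?_⟩
  rw [← card_univ, ← sum_const]
  refine sum_lt_sum (fun k _ ↦ hd k) ?_
  rcases (hd i).lt_or_eq with hi | hi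
  · exact ⟨i, mem_univ i, hi⟩
  · exact ⟨j, mem_univ j, (hd j).lt_of_ne (hi.trans_ne hij)⟩

section SecondMoment

variable {ι κ R : Type*} [Fintype ι] [DecidableEq ι] [CommRing R]

theorem sum_piFinset_const_apply (A : Finset κ) (F : κ → R) (i : ι) :
    ∑ g ∈ piFinset fun _ : ι ↦ A, F (g i) = #A ^ (card ι - 1) * ∑ a ∈ A, F a := by
  have h := sum_prod_piFinset A (fun k a ↦ if k = i then F a else 1)
  simp only [Fintype.prod_ite_eq'] at h
  rw [h, ← mul_prod_erase univ _ (mem_univ i),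
    Finset.prod_congr rfl (g := fun _ ↦ (#A : R)) fun k hk ↦ by simp [ne_of_mem_erase hk]]
  simp [mul_comm]

theorem sum_piFinset_const_apply_mul_apply_eq_zero (A : Finset κ) {F : κ → R}
    (hF : ∑ a ∈ A, F a = 0) (G : κ → R) {i j : ι} (hij : i ≠ j) :
    ∑ g ∈ piFinset fun _ : ι ↦ A, F (g i) * G (g j) = 0 := by
  have h := sum_prod_piFinset A (fun k a ↦ if k = i then F a else if k = j then G a else 1)
  have hprod : ∀ g : ι → κ, ∏ k, (if k = i then F (g k) else if k = j then G (g k) else 1) =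
      F (g i) * G (g j) := by
    intro g
    rw [← mul_prod_erase univ _ (mem_univ i),
      ← mul_prod_erase _ _ (mem_erase.2 ⟨hij.symm, mem_univ j⟩), Finset.prod_eq_one]
    · simp [hij.symm]
    · intro k hk
      simp [ne_of_mem_erase hk, ne_of_mem_erase (mem_of_mem_erase hk)]
  simp only [hprod] at h
  rw [h]
  exact prod_eq_zero (mem_univ i) (by simpa using hF)

theorem sum_piFinset_const_sq_sum_apply (A : Finset κ) {f : κ → R} (hf : ∑ a ∈ A, f a = 0) :
    ∑ g ∈ piFinset fun _ : ι ↦ A, (∑ i, f (g i)) ^ 2 =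
      card ι * #A ^ (card ι - 1) * ∑ a ∈ A, f a ^ 2 := by
  calc ∑ g ∈ piFinset fun _ : ι ↦ A, (∑ i, f (g i)) ^ 2
      = ∑ i, ∑ j, ∑ g ∈ piFinset fun _ : ι ↦ A, f (g i) * f (g j) := by
        simp only [sq, Fintype.sum_mul_sum]
        rw [Finset.sum_comm]
        exact Finset.sum_congr rfl fun i _ ↦ Finset.sum_comm
    _ = ∑ i, ∑ g ∈ piFinset fun _ : ι ↦ A, f (g i) ^ 2 := by
        refine Finset.sum_congr rfl fun i _ ↦ ?_
        rw [sum_eq_single_of_mem i (mem_univ i) fun j _ hji ↦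
          sum_piFinset_const_apply_mul_apply_eq_zero A hf f hji.symm]
        simp only [sq]
    _ = card ι * #A ^ (card ι - 1) * ∑ a ∈ A, f a ^ 2 := by
        simp [sum_piFinset_const_apply A (fun a ↦ f a ^ 2), mul_assoc]

theorem card_filter_piFinset_mul_sq_le (A : Finset κ) (f : κ → ℝ) {t : ℝ} (ht : 0 ≤ t) :
    (#{g ∈ piFinset fun _ : ι ↦ A | card ι * (𝔼 a ∈ A, f a + t) ≤ ∑ i, f (g i)} : ℝ) *
        (card ι * t) ^ 2 ≤
      card ι * #A ^ (card ι - 1) * ∑ a ∈ A, (f a - 𝔼 a ∈ A, f a) ^ 2 := by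
  set μ := 𝔼 a ∈ A, f a
  have hcentered : ∑ a ∈ A, (f a - μ) = 0 := by
    rw [sum_sub_distrib, sum_const, nsmul_eq_mul, Finset.card_mul_expect, sub_self]
  calc _ ≤ ∑ g ∈ piFinset fun _ : ι ↦ A with card ι * (μ + t) ≤ ∑ i, f (g i),
          (∑ i, (f (g i) - μ)) ^ 2 := by
        rw [← nsmul_eq_mul]
        refine card_nsmul_le_sum _ _ _ fun g hg ↦ ?_
        have hg := (mem_filter.1 hg).2
        rw [sum_sub_distrib, sum_const, card_univ, nsmul_eq_mul]
        exact pow_le_pow_left₀ (by positivity) (by linarith) 2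
    _ ≤ ∑ g ∈ piFinset fun _ : ι ↦ A, (∑ i, (f (g i) - μ)) ^ 2 :=
        sum_le_sum_of_subset_of_nonneg (filter_subset _ _) fun _ _ _ ↦ sq_nonneg _
    _ = _ := sum_piFinset_const_sq_sum_apply A hcentered

theorem eventually_lt_card_filter_piFinset_sum_lt (A : Finset κ) (hA : A.Nonempty)
    (f : κ → ℝ) {t δ : ℝ} (ht : 0 < t) (hδ : 0 < δ) :
    ∀ᶠ m : ℕ in atTop, (1 - δ) * (#A : ℝ) ^ m <
      #{g ∈ piFinset fun _ : Fin m ↦ A | ∑ i, f (g i) < m * (𝔼 a ∈ A, f a + t)} := by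
  set N : ℝ := (#A : ℝ)
  set V := ∑ a ∈ A, (f a - 𝔼 a ∈ A, f a) ^ 2
  have hN : 0 < N := Nat.cast_pos.2 hA.card_pos
  filter_upwards [tendsto_natCast_atTop_atTop.eventually_gt_atTop (V / (N * t ^ 2 * δ))]
    with m hm
  have hm0 : 0 < m := Nat.cast_pos.1 <| lt_of_le_of_lt (by positivity) hm
  have hV : V < m * (N * t ^ 2 * δ) := (div_lt_iff₀ (by positivity)).1 hm
  set B := {g ∈ piFinset fun _ : Fin m ↦ A | m * (𝔼 a ∈ A, f a + t) ≤ ∑ i, f (g i)}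
  have hB : (#B : ℝ) < δ * N ^ m := by
    have hNm : N ^ m = N * N ^ (m - 1) := by rw [← pow_succ', Nat.sub_add_cancel hm0]
    refine lt_of_mul_lt_mul_right (a := (m * t) ^ 2) ?_ (by positivity)
    calc (#B : ℝ) * (m * t) ^ 2 ≤ m * N ^ (m - 1) * V := by
          simpa using card_filter_piFinset_mul_sq_le (ι := Fin m) A f ht.le
      _ < m * N ^ (m - 1) * (m * (N * t ^ 2 * δ)) := by gcongr
      _ = δ * N ^ m * (m * t) ^ 2 := by rw [hNm]; ring
  have hsplit : (#{g ∈ piFinset fun _ : Fin m ↦ A | ∑ i, f (g i) < m * (𝔼 a ∈ A, f a + t)} : ℝ) +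
      #B = N ^ m := by
    simp only [B, ← not_lt]
    rw [← Nat.cast_add, card_filter_add_card_filter_not, card_piFinset_const, Nat.cast_pow]
  linarith

end SecondMoment

section Blocks

theorem sum_occCount {α : Type*} [Fintype α] [DecidableEq α] {L : ℕ} (w : Fin L → α) :
    ∑ z, occCount w z = L := by
  simpa [occCount] using (card_eq_sum_card_fiberwise (f := w) (s := univ) (t := univ)
    fun _ _ ↦ mem_univ _).symm

variable {s : ℕ}

theorem nonempty_of_not_balancedSet {ℓ n : ℕ} {U : Finset (Fin ℓ → Fin s)} (hn : n ∣ ℓ)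
    (h : ¬ BalancedSet s ℓ n U) : U.Nonempty := by
  rw [nonempty_iff_ne_empty]
  rintro rfl
  exact h ⟨hn, by simp⟩

theorem div_pos_of_not_balancedSet {ℓ n : ℕ} {U : Finset (Fin ℓ → Fin s)} (hn : n ∣ ℓ)
    (h : ¬ BalancedSet s ℓ n U) : 0 < ℓ / n := by
  by_contra! hK
  have : IsEmpty (Fin (ℓ / n)) := by rw [Nat.le_zero.1 hK]; infer_instance
  exact h ⟨hn, by simp [occCount]⟩

theorem exists_expect_occCount_lt_of_not_balancedSet {ℓ n : ℕ} {U : Finset (Fin ℓ → Fin s)}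
    (hn : n ∣ ℓ) (h : ¬ BalancedSet s ℓ n U) :
    ∃ d : Fin n → Fin s, 𝔼 w ∈ U, (occCount (chunk w n) d : ℝ) < (ℓ / n : ℕ) / (s : ℝ) ^ n := by
  set S : (Fin n → Fin s) → ℝ := fun z ↦ 𝔼 w ∈ U, (occCount (chunk w n) z : ℝ)
  have hS : ∃ z z', S z ≠ S z' := by
    by_contra! hS
    refine h ⟨hn, fun z z' ↦ ?_⟩
    have := congrArg ((#U : ℝ) * ·) (hS z z')
    simp only [S, Finset.card_mul_expect] at this
    exact_mod_cast this
  have hsum : ∑ z, S z = (ℓ / n : ℕ) := by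
    simp only [S]
    rw [← expect_sum_comm]
    simp [← Nat.cast_sum, sum_occCount, nonempty_of_not_balancedSet hn h]
  obtain ⟨d, hd⟩ := Fintype.exists_card_nsmul_lt_sum hS
  have hsn : (0 : ℝ) < s ^ n := by exact_mod_cast (by simpa using Fintype.card_pos_iff.2 ⟨d⟩)
  refine ⟨d, (lt_div_iff₀ hsn).2 ?_⟩
  simpa [hsum, mul_comm] using hd

theorem chunk_chunk {L k m : ℕ} (hm : m ∣ k) (hk : k ∣ L) (u : Fin L → Fin s) (i : Fin (L / k))
    (r : Fin (k / m)) :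
    chunk (chunk u k i) m r =
      chunk u m (finCongr (Nat.div_mul_div hk hm) (finProdFinEquiv (i, r))) := by
  funext j
  simp only [chunk, finCongr_apply, finProdFinEquiv_apply_val, Fin.val_cast]
  congr 2
  rw [add_mul, mul_comm (k / m), mul_assoc, Nat.div_mul_cancel hm]
  ring

theorem occCount_chunk_eq_sum {L k m : ℕ} (hm : m ∣ k) (hk : k ∣ L) (u : Fin L → Fin s)
    (z : Fin m → Fin s) :
    occCount (chunk u m) z = ∑ i : Fin (L / k), occCount (chunk (chunk u k i) m) z := by
  simp only [occCount, card_filter]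
  rw [← Equiv.sum_comp ((finProdFinEquiv).trans (finCongr (Nat.div_mul_div hk hm))),
    Fintype.sum_prod_type]
  simp [chunk_chunk hm hk]

theorem chunk_bijective {L k : ℕ} (hk : 0 < k) (hkL : k ∣ L) :
    Function.Bijective fun u : Fin L → Fin s ↦ chunk u k := by
  refine (bijective_iff_injective_and_card _).2 ⟨fun u v huv ↦ funext fun p ↦ ?_, ?_⟩
  · have hp : p.val / k < L / k := Nat.div_lt_div_of_lt_of_dvd hkL p.isLt
    have hw : ∀ w : Fin L → Fin s, w p = chunk w k ⟨p / k, hp⟩ ⟨p % k, Nat.mod_lt _ hk⟩ :=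
      fun w ↦ congrArg w (Fin.ext (Nat.div_add_mod' _ _).symm)
    rw [hw u, hw v]
    exact congrFun (congrFun huv _) _
  · simp [← pow_mul, Nat.mul_div_cancel' hkL]

theorem natCard_chunk_mem_and {L k : ℕ} (hk : 0 < k) (hkL : k ∣ L) (U : Finset (Fin k → Fin s))
    (Q : (Fin (L / k) → Fin k → Fin s) → Prop) [DecidablePred Q] :
    Nat.card {u : Fin L → Fin s // (∀ i, chunk u k i ∈ U) ∧ Q (chunk u k)} =
      #{v ∈ piFinset fun _ ↦ U | Q v} := by
  rw [← Fintype.card_coe, ← Nat.card_eq_fintype_card]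
  exact Nat.card_congr <| (Equiv.ofBijective _ (chunk_bijective hk hkL)).subtypeEquiv
    fun u ↦ by simp

theorem natCard_chunk_mem_and_occCount_div_lt {L k n : ℕ} (hk : 0 < k) (hkL : k ∣ L)
    (hn : n ∣ k) (hL : 0 < L / n) (U : Finset (Fin k → Fin s)) (d : Fin n → Fin s) (θ : ℝ) :
    Nat.card {u : Fin L → Fin s //
        (∀ i, chunk u k i ∈ U) ∧ (occCount (chunk u n) d : ℝ) / (L / n : ℕ) < θ} =
      #{v ∈ piFinset fun _ : Fin (L / k) ↦ U |
        ∑ i, (occCount (chunk (v i) n) d : ℝ) < θ * (L / n : ℕ)} := by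
  classical
  rw [← natCard_chunk_mem_and hk hkL U]
  refine Nat.card_congr (Equiv.subtypeEquivRight fun u ↦ ?_)
  rw [div_lt_iff₀ (Nat.cast_pos.2 hL), occCount_chunk_eq_sum hn hkL]
  push_cast
  rfl

end Blocks

theorem statement7_general (s : ℕ) (n : ℕ)
    (ℓU : ℕ) (hnℓU : n ∣ ℓU) (U : Finset (Fin ℓU → Fin s))
    (hnbal : ¬ BalancedSet s ℓU n U) :
    ∃ ε : ℝ, 0 < ε ∧ ∃ d : Fin n → Fin s, ∀ δ : ℝ, 0 < δ →
      ∃ ℓ₀ : ℕ, 0 < ℓ₀ ∧ ∀ ℓ : ℕ, ℓ₀ ≤ ℓ →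
        (1 - δ) * (U.card : ℝ) ^ ℓ <
          (Nat.card {u : Fin (ℓ * ℓU) → Fin s //
            (∀ i : Fin (ℓ * ℓU / ℓU), chunk u ℓU i ∈ U) ∧
            (occCount (chunk u n) d : ℝ) / ((ℓ * ℓU / n : ℕ) : ℝ)
              < 1 / (s : ℝ) ^ n - ε} : ℝ) := by
  obtain ⟨d, hd⟩ := exists_expect_occCount_lt_of_not_balancedSet hnℓU hnbal
  have hU := nonempty_of_not_balancedSet hnℓU hnbal
  have hK := div_pos_of_not_balancedSet hnℓU hnbal
  have hℓU : 0 < ℓU := Nat.pos_of_ne_zero fun h ↦ by simp [h] at hK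
  set K := ℓU / n
  set c : (Fin ℓU → Fin s) → ℝ := fun w ↦ occCount (chunk w n) d
  set t : ℝ := (K / s ^ n - 𝔼 w ∈ U, c w) / 2
  have ht : 0 < t := by simp only [t]; linarith
  refine ⟨t / K, div_pos ht (by positivity), d, fun δ hδ ↦ ?_⟩
  obtain ⟨ℓ₀, hℓ₀⟩ := eventually_atTop.1 (eventually_lt_card_filter_piFinset_sum_lt U hU c ht hδ)
  refine ⟨ℓ₀ + 1, ℓ₀.succ_pos, fun ℓ hℓ ↦ ?_⟩
  set m := ℓ * ℓU / ℓU
  have hm : m = ℓ := Nat.mul_div_cancel ℓ hℓU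
  have hlen : ℓ * ℓU / n = m * K := (Nat.div_mul_div (dvd_mul_left ℓU ℓ) hnℓU).symm
  have hthreshold : (1 / (s : ℝ) ^ n - t / K) * (ℓ * ℓU / n : ℕ) = m * (𝔼 w ∈ U, c w + t) := by
    have htK : t / K * (m * K) = m * t := by field_simp
    rw [hlen, Nat.cast_mul, sub_mul, htK, one_div_mul_eq_div]
    simp only [t]
    ring
  calc (1 - δ) * (#U : ℝ) ^ ℓ = (1 - δ) * #U ^ m := by rw [hm]
    _ < _ := hℓ₀ m (by omega)
    _ = _ := by
      rw [natCard_chunk_mem_and_occCount_div_lt hℓU (dvd_mul_left ℓU ℓ) hnℓU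
        (hlen ▸ Nat.mul_pos (by omega) hK), hthreshold]

theorem statement7 (s : ℕ) (hs : 2 ≤ s) (M : Finset ℕ) (hM : ∀ m ∈ M, 0 < m)
    (n : ℕ) (hn : 0 < n) (hnd : ∀ m ∈ M, ¬ n ∣ m)
    (ℓU : ℕ) (hℓU : 0 < ℓU) (hnℓU : n ∣ ℓU) (U : Finset (Fin ℓU → Fin s))
    (hbal : ∀ m ∈ M, BalancedSet s ℓU m U) (hnbal : ¬ BalancedSet s ℓU n U) :
    ∃ ε : ℝ, 0 < ε ∧ ∃ d : Fin n → Fin s, ∀ δ : ℝ, 0 < δ →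
      ∃ ℓ₀ : ℕ, 0 < ℓ₀ ∧ ∀ ℓ : ℕ, ℓ₀ ≤ ℓ →
        (1 - δ) * (U.card : ℝ) ^ ℓ <
          (Nat.card {u : Fin (ℓ * ℓU) → Fin s //
            (∀ i : Fin (ℓ * ℓU / ℓU), chunk u ℓU i ∈ U) ∧
            (occCount (chunk u n) d : ℝ) / ((ℓ * ℓU / n : ℕ) : ℝ)
              < 1 / (s : ℝ) ^ n - ε} : ℝ) :=
  statement7_general s n ℓU hnℓU U hnbal
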